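/- arXiv:1703.00641 — 2 statements merged into one kernel-verified Lean document; each statement's English description precedes it below -/
import Mathlib

section
/- The sample mean ȳ satisfies P( |ȳ − (μ₁+μ₂)/2| < Δ/4 ) ≥ 1 − 4·exp(−N₁/(72b²)) − 2·exp(−N₁Δ²/(288σ²)). -/
/-!
Writing `S_z = ∑ (z_i - 1/2)` and `S_w = ∑ w_i`, one has
`ȳ - (μ₁ + μ₂)/2 = ((μ₂ - μ₁) S_z + S_w) / N₁` with `|μ₂ - μ₁| ≤ 2bΔ`, so the event can fail
only if `|S_z| ≥ N₁/(12b)` or `|S_w| ≥ N₁Δ/12`. By Hoeffding's lemma `z_i - 1/2` is sub-Gaussian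
with variance proxy `1/4`, and `w_i` with proxy `σ²`; the two-sided Hoeffding inequality bounds
the two bad events by `2 exp(-N₁/(72b²))` and `2 exp(-N₁Δ²/(288σ²))`.
-/

open MeasureTheory ProbabilityTheory Real

open scoped NNReal ENNReal

namespace ProbabilityTheory

variable {Ω : Type*} [MeasurableSpace Ω] {μ : Measure Ω} {X : Ω → ℝ}

lemma HasSubgaussianMGF.measureReal_abs_ge_le [IsFiniteMeasure μ] {c : ℝ≥0}
    (h : HasSubgaussianMGF X c μ) {ε : ℝ} (hε : 0 ≤ ε) :
    μ.real {ω | ε ≤ |X ω|} ≤ 2 * exp (-ε ^ 2 / (2 * c)) := by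
  have h_subset : {ω | ε ≤ |X ω|} ⊆ {ω | ε ≤ X ω} ∪ {ω | ε ≤ (-X) ω} :=
    fun ω (hω : ε ≤ |X ω|) ↦ (le_abs.mp hω : ε ≤ X ω ∨ ε ≤ -X ω)
  calc μ.real {ω | ε ≤ |X ω|}
      ≤ μ.real {ω | ε ≤ X ω} + μ.real {ω | ε ≤ (-X) ω} :=
        (measureReal_mono h_subset).trans (measureReal_union_le _ _)
    _ ≤ 2 * exp (-ε ^ 2 / (2 * c)) := by
        linarith [h.measure_ge_le hε, h.neg.measure_ge_le hε]

lemma HasSubgaussianMGF.measureReal_abs_sum_ge_le_of_iIndepFun [IsFiniteMeasure μ]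
    {ι : Type*} {X : ι → Ω → ℝ} (h_indep : iIndepFun X μ) {c : ℝ≥0} {s : Finset ι}
    (h_subG : ∀ i ∈ s, HasSubgaussianMGF (X i) c μ) {ε : ℝ} (hε : 0 ≤ ε) :
    μ.real {ω | ε ≤ |∑ i ∈ s, X i ω|} ≤ 2 * exp (-ε ^ 2 / (2 * (s.card * c))) := by
  simpa using (sum_of_iIndepFun h_indep h_subG).measureReal_abs_ge_le hε

lemma hasSubgaussianMGF_of_map_eq_gaussianReal {v : ℝ≥0} (hX : μ.map X = gaussianReal 0 v) :
    HasSubgaussianMGF X v μ := by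
  have hXm : AEMeasurable X μ := aemeasurable_of_map_neZero (by rw [hX]; infer_instance)
  refine (HasSubgaussianMGF.id_map_iff hXm).mp ⟨fun t ↦ ?_, fun t ↦ ?_⟩
  · rw [hX]
    exact integrable_exp_mul_gaussianReal t
  · rw [mgf_gaussianReal (μ := 0) (v := v) (by rw [Measure.map_id, hX])]
    simp

lemma hasSubgaussianMGF_sub_half_of_map_eq_coin [IsProbabilityMeasure μ]
    (hX : μ.map X = (1/2 : ℝ≥0∞) • Measure.dirac 1 + (1/2 : ℝ≥0∞) • Measure.dirac 0) :
    HasSubgaussianMGF (fun ω ↦ X ω - 1/2) (1/4) μ := by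
  have hXm : AEMeasurable X μ := aemeasurable_of_map_neZero
    ⟨fun h ↦ by simpa [hX] using congrArg (· Set.univ) h⟩
  have h_mem : ∀ᵐ ω ∂μ, X ω ∈ Set.Icc 0 1 := ae_of_ae_map hXm (by rw [hX]; simp)
  have h_mean : μ[X] = 1/2 := by
    change ∫ ω, id (X ω) ∂μ = 1/2
    rw [← integral_map hXm aestronglyMeasurable_id, hX, integral_add_measure,
      integral_smul_measure, integral_smul_measure]
    · simp
    all_goals exact (integrable_dirac enorm_lt_top).smul_measure (by simp)
  convert hasSubgaussianMGF_of_mem_Icc hXm h_mem using 2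
  · rw [h_mean]
  · norm_num

end ProbabilityTheory

namespace MeasureTheory

variable {Ω : Type*} [MeasurableSpace Ω] {μ : Measure Ω}

lemma one_sub_sub_le_measureReal_of_compl_inter_subset [IsProbabilityMeasure μ]
    {A B E : Set Ω} (h : Aᶜ ∩ Bᶜ ⊆ E) : 1 - μ.real A - μ.real B ≤ μ.real E := by
  have h_cover : Set.univ ⊆ E ∪ A ∪ B := fun ω _ ↦ by
    by_contra hω
    simp only [Set.mem_union, not_or] at hω
    exact hω.1.1 (h ⟨hω.1.2, hω.2⟩)
  linarith [measureReal_mono (μ := μ) h_cover, measureReal_union_le (μ := μ) E A,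
    measureReal_union_le (μ := μ) (E ∪ A) B, probReal_univ (μ := μ)]

end MeasureTheory

lemma abs_sub_le_of_bounded_int_mul {Δ : ℝ} (hΔ : 0 ≤ Δ) {b : ℕ} {μ₁ μ₂ : ℝ}
    (h₁ : ∃ k : ℤ, |k| ≤ (b : ℤ) ∧ μ₁ = k * Δ) (h₂ : ∃ k : ℤ, |k| ≤ (b : ℤ) ∧ μ₂ = k * Δ) :
    |μ₂ - μ₁| ≤ 2 * b * Δ := by
  obtain ⟨k₁, hk₁, rfl⟩ := h₁
  obtain ⟨k₂, hk₂, rfl⟩ := h₂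
  have hk : |k₂ - k₁| ≤ 2 * (b : ℤ) := (abs_sub _ _).trans (by omega)
  rw [← sub_mul, abs_mul, abs_of_nonneg hΔ]
  exact mul_le_mul_of_nonneg_right (by exact_mod_cast hk) hΔ

lemma mean_mixture_sub_midpoint {n : ℕ} (hn : 0 < n) (μ₁ μ₂ : ℝ) (z w : Fin n → ℝ) :
    (1 / (n : ℝ)) * ∑ i, (μ₁ * (1 - z i) + μ₂ * z i + w i) - (μ₁ + μ₂) / 2
      = ((μ₂ - μ₁) * ∑ i, (z i - 1/2) + ∑ i, w i) / n := by
  have h_sum : ∑ i, (μ₁ * (1 - z i) + μ₂ * z i + w i)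
      = n * ((μ₁ + μ₂) / 2) + ((μ₂ - μ₁) * ∑ i, (z i - 1/2) + ∑ i, w i) := by
    calc _ = ∑ i, ((μ₁ + μ₂) / 2 + (μ₂ - μ₁) * (z i - 1/2) + w i) :=
          Finset.sum_congr rfl fun i _ ↦ by ring
      _ = _ := by
          rw [Finset.sum_add_distrib, Finset.sum_add_distrib, Finset.sum_const, Finset.mul_sum,
            Finset.card_univ, Fintype.card_fin, nsmul_eq_mul, add_assoc]
  rw [h_sum]
  field_simp
  ring

lemma abs_mean_mixture_sub_midpoint_lt {n b : ℕ} (hn : 0 < n) (hb : 0 < b) {Δ μ₁ μ₂ : ℝ}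
    (hμ : |μ₂ - μ₁| ≤ 2 * b * Δ) {z w : Fin n → ℝ}
    (hz : |∑ i, (z i - 1/2)| < n / (12 * b)) (hw : |∑ i, w i| < n * Δ / 12) :
    |(1 / (n : ℝ)) * ∑ i, (μ₁ * (1 - z i) + μ₂ * z i + w i) - (μ₁ + μ₂) / 2| < Δ / 4 := by
  have hn' : (0 : ℝ) < n := by exact_mod_cast hn
  have hb' : (0 : ℝ) < b := by exact_mod_cast hb
  have hΔ : 0 ≤ Δ := by nlinarith [abs_nonneg (μ₂ - μ₁)]
  rw [mean_mixture_sub_midpoint hn, abs_div, abs_of_pos hn', div_lt_iff₀ hn']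
  calc |(μ₂ - μ₁) * ∑ i, (z i - 1/2) + ∑ i, w i|
      ≤ |μ₂ - μ₁| * |∑ i, (z i - 1/2)| + |∑ i, w i| :=
        (abs_add_le _ _).trans_eq (by rw [abs_mul])
    _ ≤ 2 * b * Δ * (n / (12 * b)) + |∑ i, w i| := by gcongr
    _ < 2 * b * Δ * (n / (12 * b)) + n * Δ / 12 := by gcongr
    _ = Δ / 4 * n := by field_simp; ring

theorem sample_mean_concentration_general
    {Ω : Type} [MeasurableSpace Ω] (P : Measure Ω) [IsProbabilityMeasure P]
    (Δ σ : ℝ) (b N₁ : ℕ) (μ₁ μ₂ : ℝ) (z w : Fin N₁ → Ω → ℝ)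
    (hΔ : 0 < Δ) (hb : 0 < b) (hN : 0 < N₁)
    (hμ₁ : ∃ k : ℤ, |k| ≤ (b : ℤ) ∧ μ₁ = (k : ℝ) * Δ)
    (hμ₂ : ∃ k : ℤ, |k| ≤ (b : ℤ) ∧ μ₂ = (k : ℝ) * Δ)
    (hindep : iIndepFun (Sum.elim z w) P)
    (hz : ∀ i, Measure.map (z i) P =
      (1/2 : ENNReal) • Measure.dirac (1 : ℝ) + (1/2 : ENNReal) • Measure.dirac (0 : ℝ))
    (hw : ∀ i, Measure.map (w i) P = gaussianReal 0 (Real.toNNReal (σ ^ 2))) :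
    P {ω | |(1 / (N₁ : ℝ)) * ∑ i, (μ₁ * (1 - z i ω) + μ₂ * z i ω + w i ω)
            - (μ₁ + μ₂) / 2| < Δ / 4}
      ≥ ENNReal.ofReal (1 - 4 * Real.exp (-(N₁ : ℝ) / (72 * (b : ℝ) ^ 2))
          - 2 * Real.exp (-(N₁ : ℝ) * Δ ^ 2 / (288 * σ ^ 2))) := by
  have hz_indep : iIndepFun (fun i ω ↦ z i ω - 1/2) P :=
    (hindep.precomp Sum.inl_injective).comp (fun _ x ↦ x - 1/2) fun _ ↦ by fun_prop
  have hw_indep : iIndepFun w P := hindep.precomp (g := Sum.inr) Sum.inr_injective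
  have h_tail_z := HasSubgaussianMGF.measureReal_abs_sum_ge_le_of_iIndepFun hz_indep
    (s := Finset.univ) (fun i _ ↦ hasSubgaussianMGF_sub_half_of_map_eq_coin (hz i))
    (ε := N₁ / (12 * b)) (by positivity)
  have h_tail_w := HasSubgaussianMGF.measureReal_abs_sum_ge_le_of_iIndepFun hw_indep
    (s := Finset.univ) (fun i _ ↦ hasSubgaussianMGF_of_map_eq_gaussianReal (hw i))
    (ε := N₁ * Δ / 12) (by positivity)
  have h_exp_z : -(N₁ / (12 * b : ℝ)) ^ 2 / (2 * (N₁ * ((1/4 : ℝ≥0) : ℝ)))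
      = -(N₁ : ℝ) / (72 * (b : ℝ) ^ 2) := by
    field_simp
    norm_num
  have h_exp_w : -(N₁ * Δ / 12) ^ 2 / (2 * (N₁ * ((σ ^ 2).toNNReal : ℝ)))
      = -(N₁ : ℝ) * Δ ^ 2 / (288 * σ ^ 2) := by
    rw [Real.coe_toNNReal _ (sq_nonneg σ)]
    field_simp
    ring
  simp only [Finset.card_univ, Fintype.card_fin, h_exp_z, h_exp_w] at h_tail_z h_tail_w
  rw [ge_iff_le, ← ofReal_measureReal]
  refine ENNReal.ofReal_le_ofReal (le_trans ?_ (one_sub_sub_le_measureReal_of_compl_inter_subset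
    (A := {ω | N₁ / (12 * b) ≤ |∑ i, (z i ω - 1/2)|}) (B := {ω | N₁ * Δ / 12 ≤ |∑ i, w i ω|})
    fun ω ⟨hωz, hωw⟩ ↦ abs_mean_mixture_sub_midpoint_lt hN hb
      (abs_sub_le_of_bounded_int_mul hΔ.le hμ₁ hμ₂) (not_le.mp hωz) (not_le.mp hωw)))
  linarith [exp_pos (-(N₁ : ℝ) / (72 * (b : ℝ) ^ 2))]

/-- For `y_i = μ₁(1−z_i) + μ₂ z_i + w_i` with `z_i` i.i.d. Bernoulli(1/2),
`w_i` i.i.d. `N(0,σ²)` (all mutually independent), and `μ₁, μ₂ ∈ 𝔻 = {kΔ : |k| ≤ b}`, the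
sample mean `ȳ` satisfies
`P(|ȳ − (μ₁+μ₂)/2| < Δ/4) ≥ 1 − 4exp(−N₁/(72b²)) − 2exp(−N₁Δ²/(288σ²))`. -/
theorem sample_mean_concentration
    {Ω : Type} [MeasurableSpace Ω] (P : Measure Ω) [IsProbabilityMeasure P]
    (Δ σ : ℝ) (b N₁ : ℕ) (μ₁ μ₂ : ℝ) (z w : Fin N₁ → Ω → ℝ)
    (hΔ : 0 < Δ) (hσ : 0 < σ) (hb : 0 < b) (hN : 0 < N₁)
    (hμ₁ : ∃ k : ℤ, |k| ≤ (b : ℤ) ∧ μ₁ = (k : ℝ) * Δ)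
    (hμ₂ : ∃ k : ℤ, |k| ≤ (b : ℤ) ∧ μ₂ = (k : ℝ) * Δ)
    (hindep : iIndepFun (Sum.elim z w) P)
    (hz : ∀ i, Measure.map (z i) P =
      (1/2 : ENNReal) • Measure.dirac (1 : ℝ) + (1/2 : ENNReal) • Measure.dirac (0 : ℝ))
    (hw : ∀ i, Measure.map (w i) P = gaussianReal 0 (Real.toNNReal (σ ^ 2))) :
    P {ω | |(1 / (N₁ : ℝ)) * ∑ i, (μ₁ * (1 - z i ω) + μ₂ * z i ω + w i ω)
            - (μ₁ + μ₂) / 2| < Δ / 4}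
      ≥ ENNReal.ofReal (1 - 4 * Real.exp (-(N₁ : ℝ) / (72 * (b : ℝ) ^ 2))
          - 2 * Real.exp (-(N₁ : ℝ) * Δ ^ 2 / (288 * σ ^ 2))) :=
  sample_mean_concentration_general P Δ σ b N₁ μ₁ μ₂ z w hΔ hb hN hμ₁ hμ₂ hindep hz hw
end

section
/- For every fixed nonzero vector x ∈ ℝⁿ, P( V x = 0 ) ≤ 2·exp(−m/24). -/
/-!
Fix a coordinate `j₀` with `x j₀ ≠ 0`. In each row, the term `V i j₀ * x j₀` is independent of
the rest of the row's inner product with `x` and takes each value with probability at most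
`1/2`, so by Fubini the row is orthogonal to `x` with probability at most `1/2`. The rows are
independent, whence `P(V x = 0) ≤ 2⁻ᵐ ≤ exp (-m/24)`.
-/

open MeasureTheory ProbabilityTheory Real
open scoped ENNReal

noncomputable def rademacher : Measure ℝ :=
  (1/2 : ℝ≥0∞) • Measure.dirac 1 + (1/2 : ℝ≥0∞) • Measure.dirac (-1)

instance : IsProbabilityMeasure rademacher :=
  ⟨by simp [rademacher, ENNReal.inv_two_add_inv_two]⟩

lemma rademacher_singleton_le_half (a : ℝ) : rademacher {a} ≤ 1/2 := by
  by_cases h1 : a = 1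
  · subst h1; norm_num [rademacher]
  · by_cases h2 : a = -1
    · subst h2; norm_num [rademacher]
    · simp [rademacher, Set.indicator, Ne.symm h1, Ne.symm h2]

namespace ProbabilityTheory

variable {Ω : Type*} [MeasurableSpace Ω] {μ : Measure Ω}

lemma IndepFun.measure_add_eq_le {G : Type*} [AddGroup G] [MeasurableSpace G]
    [MeasurableSingletonClass G] [MeasurableAdd₂ G] [IsProbabilityMeasure μ] {Y S : Ω → G}
    (hY : AEMeasurable Y μ) (hS : AEMeasurable S μ) (h : IndepFun Y S μ) {p : ℝ≥0∞}
    (hp : ∀ a, μ (Y ⁻¹' {a}) ≤ p) (t : G) :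
    μ {ω | Y ω + S ω = t} ≤ p := by
  have hA : MeasurableSet {q : G × G | q.1 + q.2 = t} :=
    measurable_add (measurableSet_singleton t)
  have hslice : ∀ s : G, (fun y => (y, s)) ⁻¹' {q : G × G | q.1 + q.2 = t} = {t - s} := by
    intro s; ext y; simp [eq_sub_iff_add_eq]
  calc μ {ω | Y ω + S ω = t}
      = μ.map (fun ω => (Y ω, S ω)) {q | q.1 + q.2 = t} :=
        (Measure.map_apply_of_aemeasurable (hY.prodMk hS) hA).symm
    _ = ∫⁻ s, μ.map Y {t - s} ∂μ.map S := by
        rw [(indepFun_iff_map_prod_eq_prod_map_map hY hS).1 h, Measure.prod_apply_symm hA]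
        simp only [hslice]
    _ ≤ ∫⁻ _, p ∂μ.map S := by
        refine lintegral_mono fun s => ?_
        rw [Measure.map_apply_of_aemeasurable hY (measurableSet_singleton _)]
        exact hp _
    _ = p := by
        have := Measure.isProbabilityMeasure_map (μ := μ) hS
        simp

lemma iIndepFun.curry {ι κ β : Type*} [Fintype κ] [MeasurableSpace β]
    {f : ι × κ → Ω → β} (hf : ∀ p, AEMeasurable (f p) μ) (h : iIndepFun f μ) :
    iIndepFun (fun i ω j => f (i, j) ω) μ := by
  classical
  rw [iIndepFun_iff_measure_inter_preimage_eq_mul]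
  intro S
  induction S using Finset.induction_on with
  | empty => simp [h.isProbabilityMeasure.measure_univ]
  | insert a S ha ih =>
    intro sets hsets
    have hdisj : Disjoint ({a} ×ˢ Finset.univ : Finset (ι × κ)) (S ×ˢ Finset.univ) :=
      Finset.disjoint_product.2 (Or.inl (Finset.disjoint_singleton_left.2 ha))
    have hhead : Measurable fun (v : ({a} ×ˢ Finset.univ : Finset (ι × κ)) → β) (j : κ) =>
        v ⟨(a, j), by simp⟩ := by fun_prop
    have hrest : Measurable
        fun (v : (S ×ˢ Finset.univ : Finset (ι × κ)) → β) (i : S) (j : κ) =>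
          v ⟨(i, j), by simp⟩ := by fun_prop
    have hsplit :=
      ((h.indepFun_finset₀ _ _ hdisj hf).comp hhead hrest).measure_inter_preimage_eq_mul _ _
        (hsets a (Finset.mem_insert_self a S))
        (MeasurableSet.univ_pi fun i : S => hsets i (Finset.mem_insert_of_mem i.2))
    rw [Finset.set_biInter_insert, Finset.prod_insert ha,
      ← ih fun i hi => hsets i (Finset.mem_insert_of_mem hi)]
    convert hsplit using 3 <;> ext ω <;> simp

lemma iIndepFun.measure_sum_mul_eq_zero_le_half {κ : Type*} [Fintype κ] {X : κ → Ω → ℝ}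
    (hX : ∀ j, AEMeasurable (X j) μ) (h : iIndepFun X μ) {j₀ : κ}
    (hj₀ : μ.map (X j₀) = rademacher) {x : κ → ℝ} (hx : x j₀ ≠ 0) :
    μ {ω | ∑ j, X j ω * x j = 0} ≤ 1/2 := by
  classical
  have := h.isProbabilityMeasure
  set Y : κ → Ω → ℝ := fun j ω => X j ω * x j
  have hY : ∀ j, AEMeasurable (Y j) μ := fun j => (hX j).mul_const _
  have hind : IndepFun (Y j₀) (∑ j ∈ Finset.univ.erase j₀, Y j) μ :=
    ((h.comp (fun j t => t * x j) fun j => measurable_mul_const _).indepFun_finsetSum_of_notMem₀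
      hY (Finset.notMem_erase j₀ _)).symm
  have hatom : ∀ a, μ (Y j₀ ⁻¹' {a}) ≤ 1/2 := by
    intro a
    have : Y j₀ ⁻¹' {a} = X j₀ ⁻¹' {a / x j₀} := by ext ω; simp [Y, eq_div_iff hx]
    rw [this, ← Measure.map_apply_of_aemeasurable (hX j₀) (measurableSet_singleton _), hj₀]
    exact rademacher_singleton_le_half _
  have hsum : {ω | ∑ j, X j ω * x j = 0}
      = {ω | Y j₀ ω + (∑ j ∈ Finset.univ.erase j₀, Y j) ω = 0} := by
    ext ω; simp [Finset.sum_apply, Y]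
  rw [hsum]
  exact hind.measure_add_eq_le (hY j₀) (Finset.aemeasurable_sum _ fun j _ => hY j) hatom 0

end ProbabilityTheory

lemma half_pow_le_exp_neg_div_24 (m : ℕ) : (1/2 : ℝ) ^ m ≤ exp (-m / 24) := by
  have hhalf : (1/2 : ℝ) ≤ exp (-1/24) := by linarith [add_one_le_exp (-1/24 : ℝ)]
  calc (1/2 : ℝ) ^ m ≤ exp (-1/24) ^ m := pow_le_pow_left₀ (by norm_num) hhalf m
    _ = exp (-m / 24) := by rw [← exp_nat_mul]; ring_nf

theorem rademacher_matrix_kernel_prob_general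
    {Ω : Type} [MeasurableSpace Ω] (P : Measure Ω)
    (m n : ℕ) (V : Fin m → Fin n → Ω → ℝ)
    (hindep : iIndepFun
      (fun p : Fin m × Fin n => V p.1 p.2) P)
    (hdist : ∀ i j, Measure.map (V i j) P =
      (1/2 : ENNReal) • Measure.dirac (1 : ℝ) + (1/2 : ENNReal) • Measure.dirac (-1 : ℝ))
    (x : Fin n → ℝ) (hx : x ≠ 0) :
    P {ω | ∀ i : Fin m, ∑ j, V i j ω * x j = 0}
      ≤ ENNReal.ofReal (2 * Real.exp (-(m : ℝ) / 24)) := by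
  obtain ⟨j₀, hj₀⟩ : ∃ j, x j ≠ 0 := Function.ne_iff.1 hx
  have hmeas : ∀ i j, AEMeasurable (V i j) P := fun i j =>
    AEMeasurable.of_map_ne_zero <| (hdist i j).trans_ne (IsProbabilityMeasure.ne_zero rademacher)
  have hindep_row (i : Fin m) : iIndepFun (V i) P :=
    (iIndepFun.precomp (g := Prod.mk i) (Prod.mk_right_injective i) hindep :)
  have hindep_rows : iIndepFun (fun i ω j => V i j ω) P := hindep.curry fun p => hmeas p.1 p.2
  calc P {ω | ∀ i, ∑ j, V i j ω * x j = 0}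
      = ∏ i, P {ω | ∑ j, V i j ω * x j = 0} := by
        rw [Set.ofPred_forall]
        exact hindep_rows.meas_iInter fun i => ⟨{v | ∑ j, v j * x j = 0},
          measurableSet_eq_fun (by fun_prop) measurable_const, rfl⟩
    _ ≤ ∏ _i : Fin m, 1/2 := Finset.prod_le_prod' fun i _ =>
        (hindep_row i).measure_sum_mul_eq_zero_le_half (hmeas i) (hdist i j₀) hj₀
    _ = ENNReal.ofReal ((1/2) ^ m) := by simp [ENNReal.ofReal_pow, ENNReal.inv_pow]
    _ ≤ ENNReal.ofReal (2 * Real.exp (-(m : ℝ) / 24)) := ENNReal.ofReal_le_ofReal <| by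
        linarith [half_pow_le_exp_neg_div_24 m, exp_pos (-(m : ℝ) / 24)]

/-- For an `m × n` matrix `V` with i.i.d. Rademacher entries and any fixed
nonzero vector `x ∈ ℝⁿ`, `P(Vx = 0) ≤ 2·exp(−m/24)`. -/
theorem rademacher_matrix_kernel_prob
    {Ω : Type} [MeasurableSpace Ω] (P : Measure Ω) [IsProbabilityMeasure P]
    (m n : ℕ) (V : Fin m → Fin n → Ω → ℝ)
    (hindep : iIndepFun
      (fun p : Fin m × Fin n => V p.1 p.2) P)
    (hdist : ∀ i j, Measure.map (V i j) P =
      (1/2 : ENNReal) • Measure.dirac (1 : ℝ) + (1/2 : ENNReal) • Measure.dirac (-1 : ℝ))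
    (x : Fin n → ℝ) (hx : x ≠ 0) :
    P {ω | ∀ i : Fin m, ∑ j, V i j ω * x j = 0}
      ≤ ENNReal.ofReal (2 * Real.exp (-(m : ℝ) / 24)) :=
  rademacher_matrix_kernel_prob_general P m n V hindep hdist x hx
end
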